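/- Every n-dimensional nilpotent Lie algebra L over a field with dim L² = 1 decomposes as L = H ⊕ A with H a Heisenberg Lie algebra and A abelian. -/

import Mathlib

open Module

/-- The direct sum of two Lie rings. -/
instance prodLieRing (M N : Type*) [LieRing M] [LieRing N] : LieRing (M × N) where
  bracket x y := (⁅x.1, y.1⁆, ⁅x.2, y.2⁆)
  add_lie x y z := Prod.ext (add_lie x.1 y.1 z.1) (add_lie x.2 y.2 z.2)
  lie_add x y z := Prod.ext (lie_add x.1 y.1 z.1) (lie_add x.2 y.2 z.2)
  lie_self x := Prod.ext (lie_self x.1) (lie_self x.2)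
  leibniz_lie x y z := Prod.ext (leibniz_lie x.1 y.1 z.1) (leibniz_lie x.2 y.2 z.2)

instance prodLieAlgebra (F M N : Type*) [CommRing F] [LieRing M] [LieRing N]
    [LieAlgebra F M] [LieAlgebra F N] : LieAlgebra F (M × N) where
  lie_smul c x y := Prod.ext (lie_smul c x.1 y.1) (lie_smul c x.2 y.2)

section Defs

variable (F : Type*) [Field F]

/-- A Lie pairing `L × L → T` for the self-action of `L` by its Lie bracket. -/
structure IsLiePairing (L T : Type*) [LieRing L] [LieAlgebra F L] [LieRing T]
    [LieAlgebra F T] (h : L →ₗ[F] L →ₗ[F] T) : Prop where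
  rel1 : ∀ m m' n : L, h ⁅m, m'⁆ n = h m ⁅m', n⁆ - h m' ⁅m, n⁆
  rel2 : ∀ m n n' : L, h m ⁅n, n'⁆ = h ⁅n', m⁆ n - h ⁅n, m⁆ n'
  rel3 : ∀ m n m' n' : L, ⁅h m n, h m' n'⁆ = - h ⁅n, m⁆ ⁅m', n'⁆

/-- `T`, together with the universal pairing `t`, is the nonabelian tensor square of `L`. -/
structure IsTensorSquare (L T : Type*) [LieRing L] [LieAlgebra F L] [LieRing T]
    [LieAlgebra F T] (t : L →ₗ[F] L →ₗ[F] T) : Prop where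
  pairing : IsLiePairing F L T t
  universal : ∀ (P : Type) [LieRing P] [LieAlgebra F P] (h : L →ₗ[F] L →ₗ[F] P),
    IsLiePairing F L P h → ∃! f : T →ₗ⁅F⁆ P, ∀ m n, f (t m n) = h m n

/-- A Lie pairing `M × N → T` when `M` and `N` act trivially on each other. -/
structure IsTrivialPairing (M N T : Type*) [LieRing M] [LieAlgebra F M] [LieRing N]
    [LieAlgebra F N] [LieRing T] [LieAlgebra F T] (h : M →ₗ[F] N →ₗ[F] T) : Prop where
  rel1 : ∀ (m m' : M) (n : N), h ⁅m, m'⁆ n = 0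
  rel2 : ∀ (m : M) (n n' : N), h m ⁅n, n'⁆ = 0
  rel3 : ∀ (m : M) (n : N) (m' : M) (n' : N), ⁅h m n, h m' n'⁆ = 0

/-- The nonabelian tensor product `M ⊗ N` for trivial mutual actions. -/
structure IsTrivialTensor (M N T : Type*) [LieRing M] [LieAlgebra F M] [LieRing N]
    [LieAlgebra F N] [LieRing T] [LieAlgebra F T] (t : M →ₗ[F] N →ₗ[F] T) : Prop where
  pairing : IsTrivialPairing F M N T t
  universal : ∀ (P : Type) [LieRing P] [LieAlgebra F P] (h : M →ₗ[F] N →ₗ[F] P),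
    IsTrivialPairing F M N P h → ∃! f : T →ₗ⁅F⁆ P, ∀ m n, f (t m n) = h m n

/-- The exterior square `L ∧ L`: universal Lie pairing vanishing on the diagonal. -/
structure IsExteriorSquare (L W : Type*) [LieRing L] [LieAlgebra F L] [LieRing W]
    [LieAlgebra F W] (w : L →ₗ[F] L →ₗ[F] W) : Prop where
  pairing : IsLiePairing F L W w
  diag : ∀ l : L, w l l = 0
  universal : ∀ (P : Type) [LieRing P] [LieAlgebra F P] (h : L →ₗ[F] L →ₗ[F] P),
    IsLiePairing F L P h → (∀ l, h l l = 0) → ∃! f : W →ₗ⁅F⁆ P, ∀ m n, f (w m n) = h m n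

/-- A quadratic map between modules. -/
def IsQuadraticMap (V G : Type*) [AddCommGroup V] [Module F V] [AddCommGroup G]
    [Module F G] (q : V → G) : Prop :=
  (∀ (c : F) (v : V), q (c • v) = (c * c) • q v) ∧
    ∃ b : V →ₗ[F] V →ₗ[F] G, ∀ v v' : V, q (v + v') = q v + q v' + b v v'

/-- `G`, with the universal quadratic map `γ`, is Whitehead's universal quadratic
functor `Γ(V)`. -/
structure IsGamma (V G : Type*) [AddCommGroup V] [Module F V] [AddCommGroup G]
    [Module F G] (γ : V → G) : Prop where
  quad : IsQuadraticMap F V G γ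
  universal : ∀ (P : Type) [AddCommGroup P] [Module F P] (q : V → P),
    IsQuadraticMap F V P q → ∃! f : G →ₗ[F] P, ∀ v, f (γ v) = q v

/-- A finite-dimensional Lie algebra is the Heisenberg algebra `H(m)` iff it has
dimension `2m+1`, its derived subalgebra equals its centre, and that is one dimensional. -/
def IsHeisenberg (H : Type*) [LieRing H] [LieAlgebra F H] (m : ℕ) : Prop :=
  finrank F H = 2 * m + 1 ∧
    LieAlgebra.derivedSeries F H 1 = LieAlgebra.center F H ∧
    finrank F (LieAlgebra.derivedSeries F H 1) = 1

end Defs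

/-- `L` decomposes as a direct sum of a Heisenberg algebra `H(m)` and an abelian Lie
algebra of dimension `k`. -/
def DecomposesAs (F : Type*) [Field F] (L : Type*) [LieRing L] [LieAlgebra F L]
    (m k : ℕ) : Prop :=
  ∃ H A : LieSubalgebra F L,
    (∀ x ∈ H, ∀ y ∈ A, ⁅x, y⁆ = 0) ∧ IsCompl H.toSubmodule A.toSubmodule ∧
      IsHeisenberg F H m ∧ IsLieAbelian A ∧ finrank F A = k

/-!
In a nilpotent Lie algebra a one-dimensional ideal is central, so `L²` lies in the centre `Z`.
Fixing a coordinate `φ` on `L²`, the form `(x, y) ↦ φ ⁅x, y⁆` is alternating with radical `Z`;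
a maximal isotropic subspace of an alternating form is its own orthogonal, so
`dim L + dim Z` is even. With `C` a complement of `Z` and `A` a complement of `L²` in `Z`,
`H = C ⊕ L²` is a subalgebra with `H + Z = L` and `H ∩ Z = L²`; hence `H² = L² = Z(H)`,
`dim H = dim L - dim Z + 1` is odd, and `L = H ⊕ A` with `A` central.
-/

namespace LinearMap.BilinForm

variable {K V : Type*} [Field K] [AddCommGroup V] [Module K V] {B : LinearMap.BilinForm K V}

lemma IsAlt.orthogonal_eq_of_maximal (hB : B.IsAlt) {U : Submodule K V}
    (hU : Maximal (fun W => W ≤ B.orthogonal W) U) : B.orthogonal U = U := by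
  refine le_antisymm (fun x hx => ?_) hU.prop
  have hx' : ∀ u ∈ U, B x u = 0 := fun u hu => hB.isRefl _ _ (hx u hu)
  have hisotropic : U ⊔ K ∙ x ≤ B.orthogonal (U ⊔ K ∙ x) := by
    rintro _ hy _ hz
    obtain ⟨u, hu, _, hs, rfl⟩ := Submodule.mem_sup.mp hy
    obtain ⟨u', hu', _, ht, rfl⟩ := Submodule.mem_sup.mp hz
    obtain ⟨s, rfl⟩ := Submodule.mem_span_singleton.mp hs
    obtain ⟨t, rfl⟩ := Submodule.mem_span_singleton.mp ht
    simp [hU.prop hu u' hu', hx u' hu', hx' u hu, hB x]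
  exact hU.le_of_ge hisotropic le_sup_left
    (Submodule.mem_sup_right (Submodule.mem_span_singleton_self x))

lemma IsAlt.even_finrank_add_finrank_ker [FiniteDimensional K V] (hB : B.IsAlt) :
    Even (finrank K V + finrank K (LinearMap.ker B)) := by
  obtain ⟨U, hU⟩ := exists_maximal_of_wellFoundedGT (fun W => W ≤ B.orthogonal W) ⟨⊥, bot_le⟩
  have hUU := hB.orthogonal_eq_of_maximal hU
  have hker : LinearMap.ker B ≤ U :=
    hUU ▸ fun x hx u _ => hB.isRefl x u (by simp [LinearMap.mem_ker.mp hx])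
  have hdim := finrank_add_finrank_orthogonal' (B := B) U
  rw [hUU, inf_eq_right.mpr hker] at hdim
  exact ⟨finrank K U, hdim.symm⟩

end LinearMap.BilinForm

section Lattice

variable {α : Type*} [Lattice α] [BoundedOrder α] [IsModularLattice α] {c z d a : α}

lemma IsCompl.sup_inf_eq_of_le (h : IsCompl c z) (hd : d ≤ z) : (c ⊔ d) ⊓ z = d := by
  rw [sup_comm, sup_inf_assoc_of_le c hd, h.inf_eq_bot, sup_bot_eq]

lemma IsCompl.sup_isCompl (h : IsCompl c z) (hda : d ⊓ a = ⊥) (hz : d ⊔ a = z) :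
    IsCompl (c ⊔ d) a where
  disjoint := by
    rw [disjoint_iff, ← inf_eq_right.mpr (hz ▸ le_sup_right : a ≤ z), ← inf_assoc,
      h.sup_inf_eq_of_le (hz ▸ le_sup_left), hda]
  codisjoint := by
    rw [codisjoint_iff, sup_assoc, hz, h.sup_eq_top]

end Lattice

lemma LieModule.isTrivial_of_finrank_eq_one {F L M : Type*} [Field F] [LieRing L]
    [LieAlgebra F L] [AddCommGroup M] [Module F M] [LieRingModule L M] [LieModule F L M]
    [LieModule.IsNilpotent L M] (h : finrank F M = 1) : LieModule.IsTrivial L M := by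
  have : Nontrivial M := Module.nontrivial_of_finrank_eq_succ h
  have := nontrivial_max_triv_of_isNilpotent F L M
  obtain ⟨⟨m, hm⟩, hm0⟩ := exists_ne (0 : maxTrivSubmodule F L M)
  have hm0 : m ≠ 0 := fun h => hm0 (Subtype.ext h)
  refine ⟨fun x n => ?_⟩
  obtain ⟨c, rfl⟩ := (finrank_eq_one_iff_of_nonzero' m hm0).mp h n
  rw [lie_smul, (mem_maxTrivSubmodule F L M m).mp hm x, smul_zero]

namespace LieAlgebra

variable {F L : Type*} [Field F] [LieRing L] [LieAlgebra F L]

lemma lie_eq_zero_of_mem_center_right {z : L} (hz : z ∈ center F L) (x : L) : ⁅x, z⁆ = 0 :=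
  (LieModule.mem_maxTrivSubmodule F L L z).mp hz x

lemma lie_eq_zero_of_mem_center_left {z : L} (hz : z ∈ center F L) (x : L) : ⁅z, x⁆ = 0 := by
  rw [← lie_skew, lie_eq_zero_of_mem_center_right hz, neg_zero]

lemma _root_.LieIdeal.le_center_of_finrank_eq_one [LieRing.IsNilpotent L] (I : LieIdeal F L)
    (h : finrank F I = 1) : I ≤ center F L := by
  have : LieModule.IsNilpotent L (⊤ : LieIdeal F L) := LieModule.isNilpotent_of_top_iff'.mpr ‹_›
  have : LieModule.IsNilpotent L I := LieModule.isNilpotent_of_le F L L I ⊤ le_top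
  have := LieModule.isTrivial_of_finrank_eq_one (L := L) h
  exact fun x hx => (LieModule.mem_maxTrivSubmodule F L L x).mpr fun y =>
    congrArg Subtype.val (LieModule.IsTrivial.trivial y (⟨x, hx⟩ : I))

lemma lie_mem_derivedSeries_one (x y : L) : ⁅x, y⁆ ∈ derivedSeries F L 1 :=
  LieSubmodule.lie_mem_lie (LieSubmodule.mem_top x) (LieSubmodule.mem_top y)

def commutatorForm (φ : derivedSeries F L 1 →ₗ[F] F) : LinearMap.BilinForm F L :=
  LinearMap.mk₂ F (fun x y => φ ⟨⁅x, y⁆, lie_mem_derivedSeries_one x y⟩)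
    (fun _ _ _ => by simp only [← map_add, AddMemClass.mk_add_mk, add_lie])
    (fun _ _ _ => by simp only [← map_smul, SetLike.mk_smul_mk, smul_lie])
    (fun _ _ _ => by simp only [← map_add, AddMemClass.mk_add_mk, lie_add])
    (fun _ _ _ => by simp only [← map_smul, SetLike.mk_smul_mk, lie_smul])

lemma commutatorForm_apply (φ : derivedSeries F L 1 →ₗ[F] F) (x y : L) :
    commutatorForm φ x y = φ ⟨⁅x, y⁆, lie_mem_derivedSeries_one x y⟩ :=
  rfl

lemma commutatorForm_isAlt (φ : derivedSeries F L 1 →ₗ[F] F) : (commutatorForm φ).IsAlt := by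
  intro x
  simp only [commutatorForm_apply, lie_self]
  exact φ.map_zero

lemma ker_commutatorForm {φ : derivedSeries F L 1 →ₗ[F] F} (hφ : Function.Injective φ) :
    LinearMap.ker (commutatorForm φ) = center F L := by
  ext x
  change commutatorForm φ x = 0 ↔ ∀ y : L, ⁅y, x⁆ = 0
  simp only [LinearMap.ext_iff, commutatorForm_apply, LinearMap.zero_apply,
    map_eq_zero_iff φ hφ, LieSubmodule.mk_eq_zero]
  exact forall_congr' fun y => by rw [← lie_skew, neg_eq_zero]

lemma even_finrank_add_finrank_center [FiniteDimensional F L]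
    (h : finrank F (derivedSeries F L 1) = 1) : Even (finrank F L + finrank F (center F L)) := by
  let φ := LinearEquiv.ofFinrankEq (derivedSeries F L 1) F (h.trans (finrank_self F).symm)
  have hZ : finrank F (center F L) = finrank F (LinearMap.ker (commutatorForm φ.toLinearMap)) := by
    rw [ker_commutatorForm φ.injective]
    rfl
  rw [hZ]
  exact (commutatorForm_isAlt _).even_finrank_add_finrank_ker

end LieAlgebra

namespace LieSubalgebra

open LieAlgebra

variable {F L : Type*} [Field F] [LieRing L] [LieAlgebra F L]

def ofDerivedSeriesLe (S : Submodule F L) (hS : (derivedSeries F L 1 : Submodule F L) ≤ S) :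
    LieSubalgebra F L :=
  { S with lie_mem' := fun _ _ => hS (lie_mem_derivedSeries_one _ _) }

def ofLeCenter (S : Submodule F L) (hS : S ≤ center F L) : LieSubalgebra F L :=
  { S with
    lie_mem' := fun {x _} _ hy => by
      rw [lie_eq_zero_of_mem_center_right (hS hy) x]
      exact S.zero_mem }

lemma isLieAbelian_ofLeCenter (S : Submodule F L) (hS : S ≤ center F L) :
    IsLieAbelian (ofLeCenter S hS) :=
  ⟨fun x y => Subtype.ext (lie_eq_zero_of_mem_center_right (hS y.2) x)⟩

variable {H : LieSubalgebra F L}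

lemma exists_add_of_sup_center_eq_top (hH : H.toSubmodule ⊔ center F L = ⊤) (x : L) :
    ∃ a ∈ H, ∃ z ∈ center F L, a + z = x :=
  Submodule.mem_sup.mp (hH ▸ Submodule.mem_top)

lemma map_center_eq_inf_center (hH : H.toSubmodule ⊔ center F L = ⊤) :
    (center F H : Submodule F H).map H.toSubmodule.subtype = H.toSubmodule ⊓ center F L := by
  ext x
  constructor
  · rintro ⟨a, ha, rfl⟩
    show (a : L) ∈ H ⊓ center F L
    refine ⟨a.2, (LieModule.mem_maxTrivSubmodule F L L _).mpr fun y => ?_⟩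
    obtain ⟨b, hb, z, hz, rfl⟩ := exists_add_of_sup_center_eq_top hH y
    have hba : ⁅(b : L), (a : L)⁆ = 0 :=
      congrArg Subtype.val (lie_eq_zero_of_mem_center_right (L := H) ha ⟨b, hb⟩)
    rw [add_lie, hba, lie_eq_zero_of_mem_center_left hz, add_zero]
  · rintro ⟨hxH, hxZ⟩
    exact ⟨⟨x, hxH⟩, (LieModule.mem_maxTrivSubmodule F H H _).mpr fun y =>
      Subtype.ext (lie_eq_zero_of_mem_center_right hxZ y), rfl⟩

lemma map_derivedSeries_one_eq (hH : H.toSubmodule ⊔ center F L = ⊤) :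
    (derivedSeries F H 1 : Submodule F H).map H.toSubmodule.subtype = derivedSeries F L 1 := by
  rw [coe_derivedSeries_one_eq, coe_derivedSeries_one_eq, Submodule.map_span]
  congr 1
  ext x
  constructor
  · rintro ⟨_, ⟨a, b, rfl⟩, rfl⟩
    exact ⟨a, b, rfl⟩
  · rintro ⟨x, y, rfl⟩
    obtain ⟨a, ha, z, hz, rfl⟩ := exists_add_of_sup_center_eq_top hH x
    obtain ⟨b, hb, w, hw, rfl⟩ := exists_add_of_sup_center_eq_top hH y
    refine ⟨_, ⟨⟨a, ha⟩, ⟨b, hb⟩, rfl⟩, ?_⟩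
    simp [lie_eq_zero_of_mem_center_left hz, lie_eq_zero_of_mem_center_right hw]

lemma isHeisenberg_of_sup_center_eq_top (hH : H.toSubmodule ⊔ center F L = ⊤)
    (hinf : H.toSubmodule ⊓ center F L = derivedSeries F L 1)
    (hD : finrank F (derivedSeries F L 1) = 1) {m : ℕ} (hdim : finrank F H = 2 * m + 1) :
    IsHeisenberg F H m := by
  have hmap := (map_derivedSeries_one_eq hH).trans
    (hinf.symm.trans (map_center_eq_inf_center hH).symm)
  refine ⟨hdim, ?_, ?_⟩
  · rw [← LieSubmodule.toSubmodule_inj]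
    exact Submodule.map_injective_of_injective H.toSubmodule.injective_subtype hmap
  · calc finrank F (derivedSeries F H 1)
        = finrank F ((derivedSeries F H 1 : Submodule F H).map H.toSubmodule.subtype) :=
          (Submodule.finrank_map_subtype_eq _ _).symm
      _ = 1 := by rw [map_derivedSeries_one_eq hH]; exact hD

end LieSubalgebra

open LieAlgebra LieSubalgebra

/-- Every nilpotent Lie algebra with one-dimensional derived subalgebra is the
direct sum of a Heisenberg algebra and an abelian Lie algebra. -/
theorem stmt16 (F : Type*) [Field F] (L : Type*) [LieRing L] [LieAlgebra F L]
    [LieRing.IsNilpotent L] [FiniteDimensional F L]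
    (hm : finrank F (LieAlgebra.derivedSeries F L 1) = 1) :
    ∃ m k : ℕ, DecomposesAs F L m k := by
  let D : Submodule F L := derivedSeries F L 1
  let Z : Submodule F L := center F L
  have hDZ : D ≤ Z := LieIdeal.le_center_of_finrank_eq_one _ hm
  obtain ⟨C, hZC⟩ := Submodule.exists_isCompl Z
  obtain ⟨⟨A, hAZ⟩, hDA⟩ := exists_isCompl (⟨D, hDZ⟩ : Set.Iic Z)
  have hDA_inf : D ⊓ A = ⊥ := congrArg Subtype.val hDA.inf_eq_bot
  have hDA_sup : D ⊔ A = Z := congrArg Subtype.val hDA.sup_eq_top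
  have hHA : IsCompl (C ⊔ D) A := hZC.symm.sup_isCompl hDA_inf hDA_sup
  have hHZ : (C ⊔ D) ⊔ Z = ⊤ := by rw [sup_right_comm, hZC.symm.sup_eq_top, top_sup_eq]
  obtain ⟨k, hk⟩ := even_finrank_add_finrank_center hm
  have hdim : finrank F (C ⊔ D : Submodule F L) = 2 * (k - finrank F Z) + 1 := by
    have hL := Submodule.finrank_add_eq_of_isCompl hHA
    have hZ := Submodule.finrank_sup_add_finrank_inf_eq D A
    rw [hDA_inf, hDA_sup, finrank_bot] at hZ
    have hZL := Submodule.finrank_le Z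
    have hD : finrank F D = 1 := hm
    change finrank F L + finrank F Z = k + k at hk
    omega
  exact ⟨_, _, ofDerivedSeriesLe (C ⊔ D) le_sup_right, ofLeCenter A hAZ,
    fun x _ y hy => lie_eq_zero_of_mem_center_right (hAZ hy) x, hHA,
    isHeisenberg_of_sup_center_eq_top (H := ofDerivedSeriesLe (C ⊔ D) le_sup_right) hHZ
      (hZC.symm.sup_inf_eq_of_le hDZ) hm hdim,
    isLieAbelian_ofLeCenter A hAZ, rfl⟩
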